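/- arXiv:2506.08631 — 3 statements merged into one kernel-verified Lean document; each statement's English description precedes it below -/
import Mathlib

section
/- Let γ > 0, let W ⊆ ℝ² be a measurable set, let M ≥ 0, and let S, T̃ : W → ℝ be measurable functions with 0 ≤ S(x) ≤ M for almost every x ∈ W and with T̃² integrable on W. Then the function x ↦ S(x)·T̃(x)·r̃(T̃(x)) is integrable on W and ∫_W S(x)·T̃(x)·r̃(T̃(x)) dx ≤ (exp(−1)·M/γ)·∫_W T̃(x)² dx. -/
/-!
With `u = γ / t`, the bound `u e^{-u} ≤ e^{-1}` gives `t r̃(t) ≤ e^{-1} t² / γ`; together with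
`0 ≤ S ≤ M` this dominates the integrand pointwise by the integrable `(e^{-1} M / γ) T̃²`.
-/

open MeasureTheory

/-- The shifted Arrhenius reaction-rate function with activation parameter `γ`. -/
noncomputable def rt (γ s : ℝ) : ℝ := if 0 < s then Real.exp (-γ / s) else 0

lemma measurable_rt (γ : ℝ) : Measurable (rt γ) :=
  Measurable.ite (measurableSet_lt measurable_const measurable_id)
    (Real.measurable_exp.comp (measurable_const.div measurable_id)) measurable_const

lemma mul_rt_nonneg (γ t : ℝ) : 0 ≤ t * rt γ t := by
  unfold rt
  split_ifs with ht
  · positivity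
  · rw [mul_zero]

lemma mul_rt_le {γ : ℝ} (hγ : 0 < γ) (t : ℝ) :
    t * rt γ t ≤ Real.exp (-1) / γ * t ^ 2 := by
  unfold rt
  split_ifs with ht
  · calc t * Real.exp (-γ / t)
        = t ^ 2 / γ * (γ / t * Real.exp (-(γ / t))) := by
          rw [neg_div]; field_simp
      _ ≤ t ^ 2 / γ * Real.exp (-1) := by
          gcongr; exact Real.mul_exp_neg_le_exp_neg_one _
      _ = Real.exp (-1) / γ * t ^ 2 := by ring
  · rw [mul_zero]; positivity

lemma mul_mul_rt_le {γ : ℝ} (hγ : 0 < γ) {s M : ℝ} (hs : 0 ≤ s) (hsM : s ≤ M) (t : ℝ) :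
    s * t * rt γ t ≤ Real.exp (-1) * M / γ * t ^ 2 := by
  have hbound_nonneg : 0 ≤ Real.exp (-1) / γ * t ^ 2 := by positivity
  calc s * t * rt γ t
      = s * (t * rt γ t) := mul_assoc _ _ _
    _ ≤ s * (Real.exp (-1) / γ * t ^ 2) := mul_le_mul_of_nonneg_left (mul_rt_le hγ t) hs
    _ ≤ M * (Real.exp (-1) / γ * t ^ 2) := mul_le_mul_of_nonneg_right hsM hbound_nonneg
    _ = Real.exp (-1) * M / γ * t ^ 2 := by ring

theorem stmt2_general (γ : ℝ) (hγ : 0 < γ) (W : Set (ℝ × ℝ))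
    (M : ℝ) (S Ttil : ℝ × ℝ → ℝ)
    (hSmeas : Measurable S) (hTmeas : Measurable Ttil)
    (hS : ∀ᵐ x ∂(volume.restrict W), 0 ≤ S x ∧ S x ≤ M)
    (hT2 : IntegrableOn (fun x => (Ttil x) ^ 2) W volume) :
    IntegrableOn (fun x => S x * Ttil x * rt γ (Ttil x)) W volume ∧
    ∫ x in W, S x * Ttil x * rt γ (Ttil x) ≤
      (Real.exp (-1) * M / γ) * ∫ x in W, (Ttil x) ^ 2 := by
  have hbound : ∀ᵐ x ∂(volume.restrict W),
      ‖S x * Ttil x * rt γ (Ttil x)‖ ≤ Real.exp (-1) * M / γ * Ttil x ^ 2 := by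
    filter_upwards [hS] with x ⟨hS0, hSM⟩
    have hnonneg : 0 ≤ S x * Ttil x * rt γ (Ttil x) := by
      rw [mul_assoc]; exact mul_nonneg hS0 (mul_rt_nonneg γ _)
    rw [Real.norm_of_nonneg hnonneg]
    exact mul_mul_rt_le hγ hS0 hSM _
  have hmeas : Measurable (fun x => S x * Ttil x * rt γ (Ttil x)) :=
    (hSmeas.mul hTmeas).mul ((measurable_rt γ).comp hTmeas)
  have hint : IntegrableOn (fun x => S x * Ttil x * rt γ (Ttil x)) W volume :=
    (hT2.const_mul _).mono' hmeas.aestronglyMeasurable hbound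
  refine ⟨hint, ?_⟩
  calc ∫ x in W, S x * Ttil x * rt γ (Ttil x)
      ≤ ∫ x in W, Real.exp (-1) * M / γ * Ttil x ^ 2 :=
        integral_mono_ae hint (hT2.const_mul _) <|
          hbound.mono fun _ hx => (Real.le_norm_self _).trans hx
    _ = Real.exp (-1) * M / γ * ∫ x in W, Ttil x ^ 2 := integral_const_mul _ _

/-- Reaction-term estimate: if `0 ≤ S ≤ M` a.e. on a measurable set `W ⊆ ℝ²` and `T̃²`
is integrable on `W`, then `S·T̃·r̃(T̃)` is integrable on `W` and
`∫_W S·T̃·r̃(T̃) ≤ (exp(−1)·M/γ)·∫_W T̃²`. -/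
theorem stmt2 (γ : ℝ) (hγ : 0 < γ) (W : Set (ℝ × ℝ)) (hW : MeasurableSet W)
    (M : ℝ) (hM : 0 ≤ M) (S Ttil : ℝ × ℝ → ℝ)
    (hSmeas : Measurable S) (hTmeas : Measurable Ttil)
    (hS : ∀ᵐ x ∂(volume.restrict W), 0 ≤ S x ∧ S x ≤ M)
    (hT2 : IntegrableOn (fun x => (Ttil x) ^ 2) W volume) :
    IntegrableOn (fun x => S x * Ttil x * rt γ (Ttil x)) W volume ∧
    ∫ x in W, S x * Ttil x * rt γ (Ttil x) ≤
      (Real.exp (-1) * M / γ) * ∫ x in W, (Ttil x) ^ 2 :=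
  stmt2_general γ hγ W M S Ttil hSmeas hTmeas hS hT2
end

section
/- Let u : ℝ² → ℝ be twice continuously differentiable on an open neighborhood of W. Then ∫_W u·Δu dx ≤ −(1/R₁)·∫_W u² dx + (2R₂/R₁)·∫_{∂W} u² dσ + ∫_{∂W} u·(∂u/∂n) dσ. -/
open Set MeasureTheory intervalIntegral

/-- The four-edge boundary integral `∫_{∂W} g dσ` of `g` over the boundary of the
rectangle `[a₁,b₁]×[a₂,b₂]`. -/
noncomputable def bInt (a₁ b₁ a₂ b₂ : ℝ) (g : ℝ → ℝ → ℝ) : ℝ :=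
  (∫ y in a₂..b₂, g a₁ y) + (∫ y in a₂..b₂, g b₁ y) +
  (∫ x in a₁..b₁, g x a₂) + (∫ x in a₁..b₁, g x b₂)

/-!
Apply the divergence theorem on `W` to two vector fields. The field `u ∇u` gives Green's identity
`∫_W (u Δu + |∇u|²) = ∫_{∂W} u ∂u/∂n`, and the field `u² x` gives the Rellich-type identity
`∫_W (2 u² + 2 u x·∇u) = ∫_{∂W} (x·n) u²`. Completing the square with `|x|² ≤ R₁` on `W` gives
`-2 u x·∇u ≤ u² + R₁ |∇u|²`, hence `∫_W u² ≤ R₁ ∫_W |∇u|² + ∫_{∂W} (x·n) u²`, and `x·n ≤ R₂`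
on `∂W`. Eliminating `∫_W |∇u|²` against Green's identity gives the estimate.
-/

section PartialDeriv

variable {E : Type*} [NormedAddCommGroup E] [NormedSpace ℝ E]

noncomputable def partialFst (f : ℝ × ℝ → E) (p : ℝ × ℝ) : E := deriv (fun s => f (s, p.2)) p.1

noncomputable def partialSnd (f : ℝ × ℝ → E) (p : ℝ × ℝ) : E := deriv (fun t => f (p.1, t)) p.2

variable {f : ℝ × ℝ → E} {p : ℝ × ℝ}

theorem HasFDerivAt.hasDerivAt_slice_fst {f' : ℝ × ℝ →L[ℝ] E} (hf : HasFDerivAt f f' p) :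
    HasDerivAt (fun s => f (s, p.2)) (f' (1, 0)) p.1 :=
  hf.comp_hasDerivAt p.1 ((hasDerivAt_id p.1).prodMk (hasDerivAt_const p.1 p.2))

theorem HasFDerivAt.hasDerivAt_slice_snd {f' : ℝ × ℝ →L[ℝ] E} (hf : HasFDerivAt f f' p) :
    HasDerivAt (fun t => f (p.1, t)) (f' (0, 1)) p.2 :=
  hf.comp_hasDerivAt p.2 ((hasDerivAt_const p.2 p.1).prodMk (hasDerivAt_id p.2))

theorem partialFst_eq_fderiv (hf : DifferentiableAt ℝ f p) :
    partialFst f p = fderiv ℝ f p (1, 0) :=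
  hf.hasFDerivAt.hasDerivAt_slice_fst.deriv

theorem partialSnd_eq_fderiv (hf : DifferentiableAt ℝ f p) :
    partialSnd f p = fderiv ℝ f p (0, 1) :=
  hf.hasFDerivAt.hasDerivAt_slice_snd.deriv

theorem hasDerivAt_partialFst (hf : DifferentiableAt ℝ f p) :
    HasDerivAt (fun s => f (s, p.2)) (partialFst f p) p.1 :=
  partialFst_eq_fderiv hf ▸ hf.hasFDerivAt.hasDerivAt_slice_fst

theorem hasDerivAt_partialSnd (hf : DifferentiableAt ℝ f p) :
    HasDerivAt (fun t => f (p.1, t)) (partialSnd f p) p.2 :=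
  partialSnd_eq_fderiv hf ▸ hf.hasFDerivAt.hasDerivAt_slice_snd

variable {U : Set (ℝ × ℝ)} {n : WithTop ℕ∞}

theorem ContDiffOn.partialFst (hU : IsOpen U) (hf : ContDiffOn ℝ (n + 1) f U) :
    ContDiffOn ℝ n (partialFst f) U :=
  ((hf.fderiv_of_isOpen hU le_rfl).clm_apply contDiffOn_const).congr fun _ hp =>
    partialFst_eq_fderiv ((hf.contDiffAt (hU.mem_nhds hp)).differentiableAt (by simp))

theorem ContDiffOn.partialSnd (hU : IsOpen U) (hf : ContDiffOn ℝ (n + 1) f U) :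
    ContDiffOn ℝ n (partialSnd f) U :=
  ((hf.fderiv_of_isOpen hU le_rfl).clm_apply contDiffOn_const).congr fun _ hp =>
    partialSnd_eq_fderiv ((hf.contDiffAt (hU.mem_nhds hp)).differentiableAt (by simp))

end PartialDeriv

section Rectangle

variable {E : Type*} [NormedAddCommGroup E] [NormedSpace ℝ E] {a₁ b₁ a₂ b₂ : ℝ}
  {U : Set (ℝ × ℝ)}

theorem setIntegral_Icc_prod_eq_intervalIntegral (h₁ : a₁ ≤ b₁) (h₂ : a₂ ≤ b₂) {g : ℝ × ℝ → E}
    (hg : IntegrableOn g (Icc a₁ b₁ ×ˢ Icc a₂ b₂)) :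
    ∫ p in Icc a₁ b₁ ×ˢ Icc a₂ b₂, g p = ∫ x in a₁..b₁, ∫ y in a₂..b₂, g (x, y) := by
  rw [Measure.volume_eq_prod, setIntegral_prod _ hg, integral_of_le h₁,
    integral_Icc_eq_integral_Ioc]
  congr! 2 with x
  rw [integral_of_le h₂, integral_Icc_eq_integral_Ioc]

theorem setIntegral_partialFst_add_partialSnd_eq (h₁ : a₁ ≤ b₁) (h₂ : a₂ ≤ b₂) (hU : IsOpen U)
    (hWU : Icc a₁ b₁ ×ˢ Icc a₂ b₂ ⊆ U) {V₁ V₂ : ℝ × ℝ → E}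
    (hV₁ : ContDiffOn ℝ 1 V₁ U) (hV₂ : ContDiffOn ℝ 1 V₂ U) :
    ∫ p in Icc a₁ b₁ ×ˢ Icc a₂ b₂, (partialFst V₁ p + partialSnd V₂ p) =
      (∫ y in a₂..b₂, V₁ (b₁, y)) - (∫ y in a₂..b₂, V₁ (a₁, y)) +
        (∫ x in a₁..b₁, V₂ (x, b₂)) - ∫ x in a₁..b₁, V₂ (x, a₂) := by
  have hdiff {V : ℝ × ℝ → E} (hV : ContDiffOn ℝ 1 V U) {p} (hp : p ∈ U) :
      DifferentiableAt ℝ V p :=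
    (hV.contDiffAt (hU.mem_nhds hp)).differentiableAt one_ne_zero
  have hdiv : ContinuousOn (fun p => fderiv ℝ V₁ p (1, 0) + fderiv ℝ V₂ p (0, 1)) U :=
    ((hV₁.continuousOn_fderiv_of_isOpen hU le_rfl).clm_apply continuousOn_const).add
      ((hV₂.continuousOn_fderiv_of_isOpen hU le_rfl).clm_apply continuousOn_const)
  have hinterior : Ioo (min a₁ b₁) (max a₁ b₁) ×ˢ Ioo (min a₂ b₂) (max a₂ b₂) ⊆ U := by
    rw [min_eq_left h₁, max_eq_right h₁, min_eq_left h₂, max_eq_right h₂]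
    exact (prod_mono Ioo_subset_Icc_self Ioo_subset_Icc_self).trans hWU
  rw [setIntegral_congr_fun (measurableSet_Icc.prod measurableSet_Icc) fun p hp => by
      rw [partialFst_eq_fderiv (hdiff hV₁ (hWU hp)), partialSnd_eq_fderiv (hdiff hV₂ (hWU hp))],
    setIntegral_Icc_prod_eq_intervalIntegral h₁ h₂
      ((hdiv.mono hWU).integrableOn_compact (isCompact_Icc.prod isCompact_Icc)),
    integral2_divergence_prod_of_hasFDerivAt V₁ V₂ (fderiv ℝ V₁) (fderiv ℝ V₂) a₁ a₂ b₁ b₂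
      (by rw [uIcc_of_le h₁, uIcc_of_le h₂]; exact hV₁.continuousOn.mono hWU)
      (by rw [uIcc_of_le h₁, uIcc_of_le h₂]; exact hV₂.continuousOn.mono hWU)
      (fun p hp => (hdiff hV₁ (hinterior hp)).hasFDerivAt)
      (fun p hp => (hdiff hV₂ (hinterior hp)).hasFDerivAt)
      (by rw [uIcc_of_le h₁, uIcc_of_le h₂]
          exact (hdiv.mono hWU).integrableOn_compact (isCompact_Icc.prod isCompact_Icc))]
  abel

variable {f : ℝ × ℝ → ℝ}

theorem setIntegral_mul_laplacian_add_sq_partial_eq (h₁ : a₁ ≤ b₁) (h₂ : a₂ ≤ b₂)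
    (hU : IsOpen U) (hWU : Icc a₁ b₁ ×ˢ Icc a₂ b₂ ⊆ U) (hf : ContDiffOn ℝ 2 f U) :
    ∫ p in Icc a₁ b₁ ×ˢ Icc a₂ b₂,
        (f p * (partialFst (partialFst f) p + partialSnd (partialSnd f) p) +
          (partialFst f p ^ 2 + partialSnd f p ^ 2)) =
      (∫ y in a₂..b₂, partialFst f (b₁, y) * f (b₁, y)) -
        (∫ y in a₂..b₂, partialFst f (a₁, y) * f (a₁, y)) +
        (∫ x in a₁..b₁, partialSnd f (x, b₂) * f (x, b₂)) -
        ∫ x in a₁..b₁, partialSnd f (x, a₂) * f (x, a₂) := by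
  have hf₁ : ContDiffOn ℝ 1 f U := hf.of_le (by norm_num)
  have hfx : ContDiffOn ℝ 1 (partialFst f) U := hf.partialFst (n := 1) hU
  have hfy : ContDiffOn ℝ 1 (partialSnd f) U := hf.partialSnd (n := 1) hU
  refine Eq.trans ?_
    (setIntegral_partialFst_add_partialSnd_eq h₁ h₂ hU hWU (hfx.mul hf₁) (hfy.mul hf₁))
  refine setIntegral_congr_fun (measurableSet_Icc.prod measurableSet_Icc) fun p hp => ?_
  have hdiff {g : ℝ × ℝ → ℝ} (hg : ContDiffOn ℝ 1 g U) : DifferentiableAt ℝ g p :=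
    (hg.contDiffAt (hU.mem_nhds (hWU hp))).differentiableAt one_ne_zero
  have e₁ : partialFst (fun q => partialFst f q * f q) p =
      partialFst (partialFst f) p * f p + partialFst f p * partialFst f p :=
    ((hasDerivAt_partialFst (hdiff hfx)).mul (hasDerivAt_partialFst (hdiff hf₁))).deriv
  have e₂ : partialSnd (fun q => partialSnd f q * f q) p =
      partialSnd (partialSnd f) p * f p + partialSnd f p * partialSnd f p :=
    ((hasDerivAt_partialSnd (hdiff hfy)).mul (hasDerivAt_partialSnd (hdiff hf₁))).deriv
  rw [e₁, e₂]
  ring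

theorem setIntegral_two_mul_sq_add_mul_inner_eq (h₁ : a₁ ≤ b₁) (h₂ : a₂ ≤ b₂)
    (hU : IsOpen U) (hWU : Icc a₁ b₁ ×ˢ Icc a₂ b₂ ⊆ U) (hf : ContDiffOn ℝ 1 f U) :
    ∫ p in Icc a₁ b₁ ×ˢ Icc a₂ b₂,
        (2 * f p ^ 2 + 2 * f p * (p.1 * partialFst f p + p.2 * partialSnd f p)) =
      b₁ * (∫ y in a₂..b₂, f (b₁, y) ^ 2) - a₁ * (∫ y in a₂..b₂, f (a₁, y) ^ 2) +
        b₂ * (∫ x in a₁..b₁, f (x, b₂) ^ 2) - a₂ * ∫ x in a₁..b₁, f (x, a₂) ^ 2 := by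
  have hdiv := setIntegral_partialFst_add_partialSnd_eq h₁ h₂ hU hWU
    (contDiffOn_fst.mul (hf.pow 2)) (contDiffOn_snd.mul (hf.pow 2))
  simp only [intervalIntegral.integral_const_mul] at hdiv
  rw [← hdiv]
  refine setIntegral_congr_fun (measurableSet_Icc.prod measurableSet_Icc) fun p hp => ?_
  have hdiff : DifferentiableAt ℝ f p :=
    (hf.contDiffAt (hU.mem_nhds (hWU hp))).differentiableAt one_ne_zero
  have e₁ : partialFst (fun q : ℝ × ℝ => q.1 * f q ^ 2) p =
      1 * f p ^ 2 + p.1 * ((2 : ℕ) * f p ^ (2 - 1) * partialFst f p) :=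
    ((hasDerivAt_id p.1).mul ((hasDerivAt_partialFst hdiff).pow 2)).deriv
  have e₂ : partialSnd (fun q : ℝ × ℝ => q.2 * f q ^ 2) p =
      1 * f p ^ 2 + p.2 * ((2 : ℕ) * f p ^ (2 - 1) * partialSnd f p) :=
    ((hasDerivAt_id p.2).mul ((hasDerivAt_partialSnd hdiff).pow 2)).deriv
  rw [e₁, e₂]
  push_cast
  ring

theorem bInt_nonneg (h₁ : a₁ ≤ b₁) (h₂ : a₂ ≤ b₂) {g : ℝ → ℝ → ℝ} (hg : ∀ x y, 0 ≤ g x y) :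
    0 ≤ bInt a₁ b₁ a₂ b₂ g := by
  have hx (y : ℝ) : 0 ≤ ∫ x in a₁..b₁, g x y := integral_nonneg h₁ fun x _ => hg x y
  have hy (x : ℝ) : 0 ≤ ∫ y in a₂..b₂, g x y := integral_nonneg h₂ fun y _ => hg x y
  unfold bInt
  linarith [hx a₂, hx b₂, hy a₁, hy b₁]

theorem weighted_edge_integrals_le_mul_bInt (h₁ : a₁ ≤ b₁) (h₂ : a₂ ≤ b₂) {g : ℝ → ℝ → ℝ}
    (hg : ∀ x y, 0 ≤ g x y) {R : ℝ} (ha₁ : |a₁| ≤ R) (hb₁ : |b₁| ≤ R) (ha₂ : |a₂| ≤ R)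
    (hb₂ : |b₂| ≤ R) :
    b₁ * (∫ y in a₂..b₂, g b₁ y) - a₁ * (∫ y in a₂..b₂, g a₁ y) +
        b₂ * (∫ x in a₁..b₁, g x b₂) - a₂ * (∫ x in a₁..b₁, g x a₂) ≤
      R * bInt a₁ b₁ a₂ b₂ g := by
  have hx (y : ℝ) : 0 ≤ ∫ x in a₁..b₁, g x y := integral_nonneg h₁ fun x _ => hg x y
  have hy (x : ℝ) : 0 ≤ ∫ y in a₂..b₂, g x y := integral_nonneg h₂ fun y _ => hg x y
  unfold bInt
  nlinarith [hx a₂, hx b₂, hy a₁, hy b₁, abs_le.1 ha₁, abs_le.1 hb₁, abs_le.1 ha₂, abs_le.1 hb₂]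

theorem neg_two_mul_mul_add_mul_le {v x y d₁ d₂ R : ℝ} (hR : 0 < R) (h : x ^ 2 + y ^ 2 ≤ R) :
    -(2 * v * (x * d₁ + y * d₂)) ≤ v ^ 2 + R * (d₁ ^ 2 + d₂ ^ 2) := by
  -- `R` times the difference of the two sides
  have hsq : 0 ≤ (R * d₁ + v * x) ^ 2 + (R * d₂ + v * y) ^ 2 + v ^ 2 * (R - (x ^ 2 + y ^ 2)) := by
    have := mul_nonneg (sq_nonneg v) (sub_nonneg.2 h)
    positivity
  nlinarith

theorem setIntegral_mul_laplacian_le (h₁ : a₁ ≤ b₁) (h₂ : a₂ ≤ b₂) (hU : IsOpen U)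
    (hWU : Icc a₁ b₁ ×ˢ Icc a₂ b₂ ⊆ U) (hf : ContDiffOn ℝ 2 f U) {R₁ R₂ : ℝ} (hR₁ : 0 < R₁)
    (hW : ∀ p ∈ Icc a₁ b₁ ×ˢ Icc a₂ b₂, p.1 ^ 2 + p.2 ^ 2 ≤ R₁)
    (ha₁ : |a₁| ≤ R₂) (hb₁ : |b₁| ≤ R₂) (ha₂ : |a₂| ≤ R₂) (hb₂ : |b₂| ≤ R₂) :
    ∫ p in Icc a₁ b₁ ×ˢ Icc a₂ b₂,
        f p * (partialFst (partialFst f) p + partialSnd (partialSnd f) p) ≤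
      -(1 / R₁) * (∫ p in Icc a₁ b₁ ×ˢ Icc a₂ b₂, f p ^ 2) +
        (R₂ / R₁) * bInt a₁ b₁ a₂ b₂ (fun x y => f (x, y) ^ 2) +
        ((∫ y in a₂..b₂, partialFst f (b₁, y) * f (b₁, y)) -
          (∫ y in a₂..b₂, partialFst f (a₁, y) * f (a₁, y)) +
          (∫ x in a₁..b₁, partialSnd f (x, b₂) * f (x, b₂)) -
          ∫ x in a₁..b₁, partialSnd f (x, a₂) * f (x, a₂)) := by
  have hint {g : ℝ × ℝ → ℝ} (hg : ContinuousOn g U) : IntegrableOn g (Icc a₁ b₁ ×ˢ Icc a₂ b₂) :=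
    (hg.mono hWU).integrableOn_compact (isCompact_Icc.prod isCompact_Icc)
  have hfx : ContDiffOn ℝ 1 (partialFst f) U := hf.partialFst (n := 1) hU
  have hfy : ContDiffOn ℝ 1 (partialSnd f) U := hf.partialSnd (n := 1) hU
  have c₀ := hf.continuousOn
  have c₁ := hfx.continuousOn
  have c₂ := hfy.continuousOn
  have c₁₁ := (hfx.partialFst (n := 0) hU).continuousOn
  have c₂₂ := (hfy.partialSnd (n := 0) hU).continuousOn
  have hmono : ∫ p in Icc a₁ b₁ ×ˢ Icc a₂ b₂,
        (R₁ * (f p * (partialFst (partialFst f) p + partialSnd (partialSnd f) p)) + f p ^ 2) ≤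
      ∫ p in Icc a₁ b₁ ×ˢ Icc a₂ b₂,
        (R₁ * (f p * (partialFst (partialFst f) p + partialSnd (partialSnd f) p) +
            (partialFst f p ^ 2 + partialSnd f p ^ 2)) +
          (2 * f p ^ 2 + 2 * f p * (p.1 * partialFst f p + p.2 * partialSnd f p))) :=
    setIntegral_mono_on (hint (by fun_prop)) (hint (by fun_prop))
      (measurableSet_Icc.prod measurableSet_Icc) fun p hp => by
        linarith [neg_two_mul_mul_add_mul_le (v := f p) (d₁ := partialFst f p)
          (d₂ := partialSnd f p) hR₁ (hW p hp)]
  rw [MeasureTheory.integral_add, MeasureTheory.integral_add, MeasureTheory.integral_const_mul,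
    MeasureTheory.integral_const_mul, setIntegral_mul_laplacian_add_sq_partial_eq h₁ h₂ hU hWU hf,
    setIntegral_two_mul_sq_add_mul_inner_eq h₁ h₂ hU hWU (hf.of_le (by norm_num))] at hmono
  · have hbdry := weighted_edge_integrals_le_mul_bInt h₁ h₂ (g := fun x y => f (x, y) ^ 2)
      (fun x y => sq_nonneg _) ha₁ hb₁ ha₂ hb₂
    have hdiv {X P S F : ℝ} (h : R₁ * X + P ≤ R₁ * F + R₂ * S) :
        X ≤ -(1 / R₁) * P + R₂ / R₁ * S + F := by
      rw [show -(1 / R₁) * P + R₂ / R₁ * S + F = (R₁ * F + R₂ * S - P) / R₁ by field_simp; ring,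
        le_div_iff₀ hR₁]
      linarith
    exact hdiv (by linarith)
  all_goals exact hint (by fun_prop)

theorem intervalIntegral_mul_laplacian_le (h₁ : a₁ ≤ b₁) (h₂ : a₂ ≤ b₂) (hU : IsOpen U)
    (hWU : Icc a₁ b₁ ×ˢ Icc a₂ b₂ ⊆ U) (hf : ContDiffOn ℝ 2 f U) {R₁ R₂ : ℝ} (hR₁ : 0 < R₁)
    (hW : ∀ p ∈ Icc a₁ b₁ ×ˢ Icc a₂ b₂, p.1 ^ 2 + p.2 ^ 2 ≤ R₁)
    (ha₁ : |a₁| ≤ R₂) (hb₁ : |b₁| ≤ R₂) (ha₂ : |a₂| ≤ R₂) (hb₂ : |b₂| ≤ R₂) :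
    ∫ x in a₁..b₁, ∫ y in a₂..b₂,
        f (x, y) * (partialFst (partialFst f) (x, y) + partialSnd (partialSnd f) (x, y)) ≤
      -(1 / R₁) * (∫ x in a₁..b₁, ∫ y in a₂..b₂, f (x, y) ^ 2) +
        (R₂ / R₁) * bInt a₁ b₁ a₂ b₂ (fun x y => f (x, y) ^ 2) +
        ((∫ y in a₂..b₂, partialFst f (b₁, y) * f (b₁, y)) -
          (∫ y in a₂..b₂, partialFst f (a₁, y) * f (a₁, y)) +
          (∫ x in a₁..b₁, partialSnd f (x, b₂) * f (x, b₂)) -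
          ∫ x in a₁..b₁, partialSnd f (x, a₂) * f (x, a₂)) := by
  have c₀ := hf.continuousOn.mono hWU
  have c₁₁ := ((hf.partialFst (n := 1) hU).partialFst (n := 0) hU).continuousOn.mono hWU
  have c₂₂ := ((hf.partialSnd (n := 1) hU).partialSnd (n := 0) hU).continuousOn.mono hWU
  have key := setIntegral_mul_laplacian_le h₁ h₂ hU hWU hf hR₁ hW ha₁ hb₁ ha₂ hb₂
  rwa [setIntegral_Icc_prod_eq_intervalIntegral h₁ h₂
      ((by fun_prop : ContinuousOn _ _).integrableOn_compact (isCompact_Icc.prod isCompact_Icc)),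
    setIntegral_Icc_prod_eq_intervalIntegral h₁ h₂
      ((by fun_prop : ContinuousOn _ _).integrableOn_compact (isCompact_Icc.prod isCompact_Icc))]
    at key

end Rectangle

theorem IsCompact.le_csSup_image {X : Type*} [TopologicalSpace X] {K : Set X} (hK : IsCompact K)
    {φ : X → ℝ} (hφ : Continuous φ) {p : X} (hp : p ∈ K) : φ p ≤ sSup (φ '' K) :=
  le_csSup (hK.image hφ).bddAbove (mem_image_of_mem φ hp)

/-- Lemma 1 of the paper (diffusion-term estimate) on the rectangle
`W = [a₁,b₁]×[a₂,b₂]`, with `R₁ = sup_{x∈W}|x|²`, `R₂ = sup_{x∈∂W}|x|`: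
`∫_W u·Δu ≤ −(1/R₁)·∫_W u² + (2R₂/R₁)·∫_{∂W} u² dσ + ∫_{∂W} u·(∂u/∂n) dσ`. -/
theorem stmt5 (a₁ b₁ a₂ b₂ : ℝ) (h₁ : a₁ < b₁) (h₂ : a₂ < b₂)
    (u : ℝ → ℝ → ℝ)
    (hu : ∃ U : Set (ℝ × ℝ), IsOpen U ∧ (Icc a₁ b₁ ×ˢ Icc a₂ b₂) ⊆ U ∧
      ContDiffOn ℝ 2 (fun p : ℝ × ℝ => u p.1 p.2) U)
    (R₁ R₂ : ℝ)
    (hR₁ : R₁ = sSup ((fun p : ℝ × ℝ => p.1 ^ 2 + p.2 ^ 2) '' (Icc a₁ b₁ ×ˢ Icc a₂ b₂)))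
    (hR₂ : R₂ = sSup ((fun p : ℝ × ℝ => Real.sqrt (p.1 ^ 2 + p.2 ^ 2)) ''
      ((({a₁, b₁} : Set ℝ) ×ˢ Icc a₂ b₂) ∪ (Icc a₁ b₁ ×ˢ ({a₂, b₂} : Set ℝ))))) :
    (∫ x in a₁..b₁, ∫ y in a₂..b₂,
        u x y * (deriv (fun s => deriv (fun s' => u s' y) s) x
               + deriv (fun s => deriv (fun s' => u x s') s) y))
    ≤ -(1 / R₁) * (∫ x in a₁..b₁, ∫ y in a₂..b₂, (u x y) ^ 2)
      + (2 * R₂ / R₁) * bInt a₁ b₁ a₂ b₂ (fun x y => (u x y) ^ 2)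
      + ((∫ y in a₂..b₂, deriv (fun s => u s y) b₁ * u b₁ y)
        - (∫ y in a₂..b₂, deriv (fun s => u s y) a₁ * u a₁ y)
        + (∫ x in a₁..b₁, deriv (fun s => u x s) b₂ * u x b₂)
        - (∫ x in a₁..b₁, deriv (fun s => u x s) a₂ * u x a₂)) := by
  obtain ⟨U, hU, hWU, hu⟩ := hu
  have hW (p) (hp : p ∈ Icc a₁ b₁ ×ˢ Icc a₂ b₂) : p.1 ^ 2 + p.2 ^ 2 ≤ R₁ :=
    ((isCompact_Icc.prod isCompact_Icc).le_csSup_image (by fun_prop) hp).trans_eq hR₁.symm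
  have hR₁pos : 0 < R₁ := by
    have ha : a₁ ^ 2 + a₂ ^ 2 ≤ R₁ := hW (a₁, a₂) ⟨left_mem_Icc.2 h₁.le, left_mem_Icc.2 h₂.le⟩
    have hb : b₁ ^ 2 + a₂ ^ 2 ≤ R₁ := hW (b₁, a₂) ⟨right_mem_Icc.2 h₁.le, left_mem_Icc.2 h₂.le⟩
    nlinarith [sq_pos_of_pos (sub_pos.2 h₁), sq_nonneg (a₁ + b₁), sq_nonneg a₂]
  have hbdry (p) (hp : p ∈ (({a₁, b₁} : Set ℝ) ×ˢ Icc a₂ b₂) ∪ (Icc a₁ b₁ ×ˢ ({a₂, b₂} : Set ℝ))) :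
      |p.1| ≤ R₂ ∧ |p.2| ≤ R₂ := by
    have h : √(p.1 ^ 2 + p.2 ^ 2) ≤ R₂ :=
      (((((finite_singleton b₁).insert a₁).isCompact.prod isCompact_Icc).union
        (isCompact_Icc.prod ((finite_singleton b₂).insert a₂).isCompact)).le_csSup_image
          (by fun_prop) hp).trans_eq hR₂.symm
    exact ⟨(Real.abs_le_sqrt (by nlinarith)).trans h, (Real.abs_le_sqrt (by nlinarith)).trans h⟩
  obtain ⟨ha₁, ha₂⟩ := hbdry (a₁, a₂) (Or.inl ⟨by simp, left_mem_Icc.2 h₂.le⟩)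
  have key := intervalIntegral_mul_laplacian_le h₁.le h₂.le hU hWU hu hR₁pos hW ha₁
    (hbdry (b₁, a₂) (Or.inl ⟨by simp, left_mem_Icc.2 h₂.le⟩)).1 ha₂
    (hbdry (a₁, b₂) (Or.inl ⟨by simp, right_mem_Icc.2 h₂.le⟩)).2
  simp only [partialFst, partialSnd] at key
  have hS := mul_nonneg (div_nonneg ((abs_nonneg a₁).trans ha₁) hR₁pos.le)
    (bInt_nonneg h₁.le h₂.le fun x y => sq_nonneg (u x y))
  linarith [show 2 * R₂ / R₁ * bInt a₁ b₁ a₂ b₂ (fun x y => u x y ^ 2) =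
    2 * (R₂ / R₁ * bInt a₁ b₁ a₂ b₂ (fun x y => u x y ^ 2)) by ring]
end

section
/- Let u : ℝ² → ℝ and v = (v₁,v₂) : ℝ² → ℝ² be continuously differentiable on an open neighborhood of W, and let 𝒱 ≥ 0 satisfy |∇·v(x)| ≤ 𝒱 for all x ∈ W. Then −∫_W u·(v·∇u) dx ≤ −½·∫_{∂W} u²·(v·n) dσ + (𝒱/2)·∫_W u² dx. -/
open Set MeasureTheory intervalIntegral Function
open scoped Interval

/-! Green's theorem for the field `u² v` turns the boundary term into
`∫_W div (u² v) = 2 ∫_W u (v·∇u) + ∫_W u² div v`, and the last integral is at most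
`𝒱 ∫_W u²` because `u² ≥ 0`. -/

theorem ContDiffOn.differentiableAt_of_isOpen {𝕜 E F : Type*} [NontriviallyNormedField 𝕜]
    [NormedAddCommGroup E] [NormedSpace 𝕜 E] [NormedAddCommGroup F] [NormedSpace 𝕜 F]
    {g : E → F} {s : Set E} {n : WithTop ℕ∞} (hs : IsOpen s) (hg : ContDiffOn 𝕜 n g s)
    (hn : n ≠ 0) {p : E} (hp : p ∈ s) : DifferentiableAt 𝕜 g p :=
  (hg.contDiffAt (hs.mem_nhds hp)).differentiableAt hn

section PartialDerivatives

variable {f : ℝ → ℝ → ℝ} {x y : ℝ} {U : Set (ℝ × ℝ)}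

theorem hasDerivAt_partial_fst (hf : DifferentiableAt ℝ (uncurry f) (x, y)) :
    HasDerivAt (f · y) (fderiv ℝ (uncurry f) (x, y) (1, 0)) x :=
  (hf.hasFDerivAt.comp_hasDerivAt x ((hasDerivAt_id' x).prodMk (hasDerivAt_const x y)) :)

theorem hasDerivAt_partial_snd (hf : DifferentiableAt ℝ (uncurry f) (x, y)) :
    HasDerivAt (f x ·) (fderiv ℝ (uncurry f) (x, y) (0, 1)) y :=
  hf.hasFDerivAt.comp_hasDerivAt y ((hasDerivAt_const y x).prodMk (hasDerivAt_id y))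

theorem DifferentiableAt.partial_fst (hf : DifferentiableAt ℝ (uncurry f) (x, y)) :
    DifferentiableAt ℝ (f · y) x :=
  (hasDerivAt_partial_fst hf).differentiableAt

theorem DifferentiableAt.partial_snd (hf : DifferentiableAt ℝ (uncurry f) (x, y)) :
    DifferentiableAt ℝ (f x ·) y :=
  (hasDerivAt_partial_snd hf).differentiableAt

theorem ContDiffOn.continuousOn_deriv_fst (hU : IsOpen U) (hf : ContDiffOn ℝ 1 (uncurry f) U) :
    ContinuousOn (fun p : ℝ × ℝ => deriv (f · p.2) p.1) U := by
  have hc : ContinuousOn (fun p => fderiv ℝ (uncurry f) p (1, 0)) U :=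
    (hf.continuousOn_fderiv_of_isOpen hU le_rfl).clm_apply continuousOn_const
  exact hc.congr fun p hp =>
    (hasDerivAt_partial_fst (hf.differentiableAt_of_isOpen hU one_ne_zero hp)).deriv

theorem ContDiffOn.continuousOn_deriv_snd (hU : IsOpen U) (hf : ContDiffOn ℝ 1 (uncurry f) U) :
    ContinuousOn (fun p : ℝ × ℝ => deriv (f p.1 ·) p.2) U := by
  have hc : ContinuousOn (fun p => fderiv ℝ (uncurry f) p (0, 1)) U :=
    (hf.continuousOn_fderiv_of_isOpen hU le_rfl).clm_apply continuousOn_const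
  exact hc.congr fun p hp =>
    (hasDerivAt_partial_snd (hf.differentiableAt_of_isOpen hU one_ne_zero hp)).deriv

end PartialDerivatives

theorem integral2_divergence_of_contDiffOn {a₁ b₁ a₂ b₂ : ℝ} {F G : ℝ → ℝ → ℝ}
    {U : Set (ℝ × ℝ)} (hU : IsOpen U) (hWU : [[a₁, b₁]] ×ˢ [[a₂, b₂]] ⊆ U)
    (hF : ContDiffOn ℝ 1 (uncurry F) U) (hG : ContDiffOn ℝ 1 (uncurry G) U) :
    (∫ x in a₁..b₁, ∫ y in a₂..b₂, (deriv (F · y) x + deriv (G x ·) y)) =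
      (((∫ x in a₁..b₁, G x b₂) - ∫ x in a₁..b₁, G x a₂) + ∫ y in a₂..b₂, F b₁ y) -
        ∫ y in a₂..b₂, F a₁ y := by
  have hWU' : Ioo (min a₁ b₁) (max a₁ b₁) ×ˢ Ioo (min a₂ b₂) (max a₂ b₂) \ ∅ ⊆ U :=
    fun p hp => hWU (prod_mono Ioo_subset_Icc_self Ioo_subset_Icc_self hp.1)
  have hdiv := integral2_divergence_prod_of_hasFDerivAt_off_countable (uncurry F) (uncurry G)
    (fderiv ℝ (uncurry F)) (fderiv ℝ (uncurry G)) a₁ a₂ b₁ b₂ ∅ countable_empty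
    (hF.continuousOn.mono hWU) (hG.continuousOn.mono hWU)
    (fun p hp => (hF.differentiableAt_of_isOpen hU one_ne_zero (hWU' hp)).hasFDerivAt)
    (fun p hp => (hG.differentiableAt_of_isOpen hU one_ne_zero (hWU' hp)).hasFDerivAt)
    ((((hF.continuousOn_fderiv_of_isOpen hU le_rfl).clm_apply continuousOn_const).add
      ((hG.continuousOn_fderiv_of_isOpen hU le_rfl).clm_apply continuousOn_const)).mono hWU
      |>.integrableOn_compact (isCompact_uIcc.prod isCompact_uIcc))
  refine Eq.trans ?_ hdiv
  refine integral_congr fun x hx => integral_congr fun y hy => ?_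
  have hp : (x, y) ∈ U := hWU ⟨hx, hy⟩
  simp only [(hasDerivAt_partial_fst (hF.differentiableAt_of_isOpen hU one_ne_zero hp)).deriv,
    (hasDerivAt_partial_snd (hG.differentiableAt_of_isOpen hU one_ne_zero hp)).deriv]

section IteratedIntegral

variable {a₁ b₁ a₂ b₂ : ℝ} {f g : ℝ → ℝ → ℝ}

theorem integral_integral_eq_setIntegral_prod (h₁ : a₁ ≤ b₁) (h₂ : a₂ ≤ b₂)
    (hf : IntegrableOn (uncurry f) (Icc a₁ b₁ ×ˢ Icc a₂ b₂)) :
    ∫ x in a₁..b₁, ∫ y in a₂..b₂, f x y = ∫ p in Icc a₁ b₁ ×ˢ Icc a₂ b₂, uncurry f p := by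
  rw [Measure.volume_eq_prod, setIntegral_prod _ hf, integral_of_le h₁,
    integral_Icc_eq_integral_Ioc]
  exact setIntegral_congr_fun measurableSet_Ioc fun x _ =>
    (integral_of_le h₂).trans integral_Icc_eq_integral_Ioc.symm

theorem integral_integral_add (h₁ : a₁ ≤ b₁) (h₂ : a₂ ≤ b₂)
    (hf : IntegrableOn (uncurry f) (Icc a₁ b₁ ×ˢ Icc a₂ b₂))
    (hg : IntegrableOn (uncurry g) (Icc a₁ b₁ ×ˢ Icc a₂ b₂)) :
    ∫ x in a₁..b₁, ∫ y in a₂..b₂, (f x y + g x y) =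
      (∫ x in a₁..b₁, ∫ y in a₂..b₂, f x y) + ∫ x in a₁..b₁, ∫ y in a₂..b₂, g x y := by
  rw [integral_integral_eq_setIntegral_prod h₁ h₂ hf,
    integral_integral_eq_setIntegral_prod h₁ h₂ hg,
    integral_integral_eq_setIntegral_prod (f := fun x y => f x y + g x y) h₁ h₂ (hf.add hg)]
  exact integral_add hf hg

theorem integral_integral_mono_on (h₁ : a₁ ≤ b₁) (h₂ : a₂ ≤ b₂)
    (hf : IntegrableOn (uncurry f) (Icc a₁ b₁ ×ˢ Icc a₂ b₂))
    (hg : IntegrableOn (uncurry g) (Icc a₁ b₁ ×ˢ Icc a₂ b₂))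
    (hfg : ∀ x ∈ Icc a₁ b₁, ∀ y ∈ Icc a₂ b₂, f x y ≤ g x y) :
    ∫ x in a₁..b₁, ∫ y in a₂..b₂, f x y ≤ ∫ x in a₁..b₁, ∫ y in a₂..b₂, g x y := by
  rw [integral_integral_eq_setIntegral_prod h₁ h₂ hf,
    integral_integral_eq_setIntegral_prod h₁ h₂ hg]
  exact setIntegral_mono_on hf hg (measurableSet_Icc.prod measurableSet_Icc)
    fun p hp => hfg p.1 hp.1 p.2 hp.2

end IteratedIntegral

theorem deriv_sq_mul {u v : ℝ → ℝ} {x : ℝ} (hu : DifferentiableAt ℝ u x)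
    (hv : DifferentiableAt ℝ v x) :
    deriv (fun s => u s ^ 2 * v s) x = 2 * u x * deriv u x * v x + u x ^ 2 * deriv v x := by
  rw [((hu.hasDerivAt.fun_pow 2).fun_mul hv.hasDerivAt).deriv]
  ring

theorem deriv_sq_mul_add_deriv_sq_mul {u v₁ v₂ : ℝ → ℝ → ℝ} {x y : ℝ}
    (hu : DifferentiableAt ℝ (uncurry u) (x, y)) (hv₁ : DifferentiableAt ℝ (uncurry v₁) (x, y))
    (hv₂ : DifferentiableAt ℝ (uncurry v₂) (x, y)) :
    deriv (fun s => u s y ^ 2 * v₁ s y) x + deriv (fun t => u x t ^ 2 * v₂ x t) y =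
      2 * (u x y * (v₁ x y * deriv (fun s => u s y) x + v₂ x y * deriv (fun s => u x s) y)) +
        u x y ^ 2 * (deriv (fun s => v₁ s y) x + deriv (fun s => v₂ x s) y) := by
  rw [deriv_sq_mul hu.partial_fst hv₁.partial_fst, deriv_sq_mul hu.partial_snd hv₂.partial_snd]
  ring

theorem stmt7_general (a₁ b₁ a₂ b₂ : ℝ) (h₁ : a₁ < b₁) (h₂ : a₂ < b₂)
    (u v₁ v₂ : ℝ → ℝ → ℝ)
    (hu : ∃ U : Set (ℝ × ℝ), IsOpen U ∧ (Icc a₁ b₁ ×ˢ Icc a₂ b₂) ⊆ U ∧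
      ContDiffOn ℝ 1 (fun p : ℝ × ℝ => u p.1 p.2) U ∧
      ContDiffOn ℝ 1 (fun p : ℝ × ℝ => v₁ p.1 p.2) U ∧
      ContDiffOn ℝ 1 (fun p : ℝ × ℝ => v₂ p.1 p.2) U)
    (V : ℝ)
    (hdiv : ∀ x ∈ Icc a₁ b₁, ∀ y ∈ Icc a₂ b₂,
      |deriv (fun s => v₁ s y) x + deriv (fun s => v₂ x s) y| ≤ V) :
    -(∫ x in a₁..b₁, ∫ y in a₂..b₂,
        u x y * (v₁ x y * deriv (fun s => u s y) x + v₂ x y * deriv (fun s => u x s) y))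
    ≤ -(1 / 2) * ((∫ y in a₂..b₂, (u b₁ y) ^ 2 * v₁ b₁ y)
        - (∫ y in a₂..b₂, (u a₁ y) ^ 2 * v₁ a₁ y)
        + (∫ x in a₁..b₁, (u x b₂) ^ 2 * v₂ x b₂)
        - (∫ x in a₁..b₁, (u x a₂) ^ 2 * v₂ x a₂))
      + (V / 2) * ∫ x in a₁..b₁, ∫ y in a₂..b₂, (u x y) ^ 2 := by
  obtain ⟨U, hU, hWU, hu, hv₁, hv₂⟩ := hu
  have hK : IsCompact (Icc a₁ b₁ ×ˢ Icc a₂ b₂) := isCompact_Icc.prod isCompact_Icc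
  have hW : [[a₁, b₁]] ×ˢ [[a₂, b₂]] ⊆ U := by rwa [uIcc_of_le h₁.le, uIcc_of_le h₂.le]
  have hGreen := integral2_divergence_of_contDiffOn (F := fun x y => u x y ^ 2 * v₁ x y)
    (G := fun x y => u x y ^ 2 * v₂ x y) hU hW ((hu.pow 2).mul hv₁) ((hu.pow 2).mul hv₂)
  have hI : IntegrableOn (uncurry fun x y =>
      u x y * (v₁ x y * deriv (fun s => u s y) x + v₂ x y * deriv (fun s => u x s) y))
      (Icc a₁ b₁ ×ˢ Icc a₂ b₂) :=
    ((hu.continuousOn.mul ((hv₁.continuousOn.mul (hu.continuousOn_deriv_fst hU)).add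
      (hv₂.continuousOn.mul (hu.continuousOn_deriv_snd hU)))).mono hWU).integrableOn_compact hK
  have hQ : IntegrableOn (uncurry fun x y =>
      u x y ^ 2 * (deriv (fun s => v₁ s y) x + deriv (fun s => v₂ x s) y))
      (Icc a₁ b₁ ×ˢ Icc a₂ b₂) :=
    (((hu.continuousOn.pow 2).mul ((hv₁.continuousOn_deriv_fst hU).add
      (hv₂.continuousOn_deriv_snd hU))).mono hWU).integrableOn_compact hK
  have hu2 : IntegrableOn (uncurry fun x y => u x y ^ 2 * V) (Icc a₁ b₁ ×ˢ Icc a₂ b₂) :=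
    (((hu.continuousOn.pow 2).mul continuousOn_const).mono hWU).integrableOn_compact hK
  have hsplit := (integral_congr fun x hx => integral_congr fun y hy =>
    have hp : (x, y) ∈ U := hW ⟨hx, hy⟩
    deriv_sq_mul_add_deriv_sq_mul (hu.differentiableAt_of_isOpen hU one_ne_zero hp)
      (hv₁.differentiableAt_of_isOpen hU one_ne_zero hp)
      (hv₂.differentiableAt_of_isOpen hU one_ne_zero hp)).trans
    (integral_integral_add h₁.le h₂.le (hI.const_mul 2) hQ)
  have hbound := integral_integral_mono_on h₁.le h₂.le hQ hu2 fun x hx y hy =>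
    mul_le_mul_of_nonneg_left ((le_abs_self _).trans (hdiv x hx y hy)) (sq_nonneg (u x y))
  simp only [intervalIntegral.integral_const_mul, intervalIntegral.integral_mul_const]
    at hsplit hbound
  linarith

/-- Lemma 2 of the paper (advection-term estimate) on the rectangle `W = [a₁,b₁]×[a₂,b₂]`:
if `|∇·v| ≤ 𝒱` on `W`, then
`−∫_W u·(v·∇u) ≤ −½·∫_{∂W} u²·(v·n) dσ + (𝒱/2)·∫_W u²`, with the boundary term
written out edge by edge. -/
theorem stmt7 (a₁ b₁ a₂ b₂ : ℝ) (h₁ : a₁ < b₁) (h₂ : a₂ < b₂)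
    (u v₁ v₂ : ℝ → ℝ → ℝ)
    (hu : ∃ U : Set (ℝ × ℝ), IsOpen U ∧ (Icc a₁ b₁ ×ˢ Icc a₂ b₂) ⊆ U ∧
      ContDiffOn ℝ 1 (fun p : ℝ × ℝ => u p.1 p.2) U ∧
      ContDiffOn ℝ 1 (fun p : ℝ × ℝ => v₁ p.1 p.2) U ∧
      ContDiffOn ℝ 1 (fun p : ℝ × ℝ => v₂ p.1 p.2) U)
    (V : ℝ) (hV : 0 ≤ V)
    (hdiv : ∀ x ∈ Icc a₁ b₁, ∀ y ∈ Icc a₂ b₂,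
      |deriv (fun s => v₁ s y) x + deriv (fun s => v₂ x s) y| ≤ V) :
    -(∫ x in a₁..b₁, ∫ y in a₂..b₂,
        u x y * (v₁ x y * deriv (fun s => u s y) x + v₂ x y * deriv (fun s => u x s) y))
    ≤ -(1 / 2) * ((∫ y in a₂..b₂, (u b₁ y) ^ 2 * v₁ b₁ y)
        - (∫ y in a₂..b₂, (u a₁ y) ^ 2 * v₁ a₁ y)
        + (∫ x in a₁..b₁, (u x b₂) ^ 2 * v₂ x b₂)
        - (∫ x in a₁..b₁, (u x a₂) ^ 2 * v₂ x a₂))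
      + (V / 2) * ∫ x in a₁..b₁, ∫ y in a₂..b₂, (u x y) ^ 2 :=
  stmt7_general a₁ b₁ a₂ b₂ h₁ h₂ u v₁ v₂ hu V hdiv
end
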